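/- For every real x, ∑_{k=1}^{∞} (k(k+1)/2^k) · sinh(x)/cosh(x)^{2k+3} = 4 sinh(2x)/cosh(2x)³. -/

import Mathlib

/-! With `r = 1 / (2 cosh² x)` the `k`-th term is `binom(k+2, 2) r^k · sinh x / cosh⁵ x`, so the series
sums to `(1 - r)⁻³ · sinh x / cosh⁵ x`, and `1 - r = cosh 2x / (2 cosh² x)`. -/

open Real

lemma hasSum_triangular_mul_geometric {𝕜 : Type*} [NormedField 𝕜] [CompleteSpace 𝕜]
    [NeZero (2 : 𝕜)] {r : 𝕜} (hr : ‖r‖ < 1) :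
    HasSum (fun n : ℕ ↦ ((n : 𝕜) + 1) * (n + 2) / 2 * r ^ n) (1 / (1 - r) ^ 3) := by
  convert hasSum_choose_mul_geometric_of_norm_lt_one 2 hr using 2 with n
  rw [Nat.cast_choose_two]
  push_cast
  ring

lemma one_sub_inv_two_mul_cosh_sq (x : ℝ) :
    1 - (2 * cosh x ^ 2)⁻¹ = cosh (2 * x) / (2 * cosh x ^ 2) := by
  have hc : cosh x ≠ 0 := (cosh_pos x).ne'
  rw [cosh_two_mul, sinh_sq]
  field_simp
  ring

theorem stmt_19 (x : ℝ) :
    ∑' k : ℕ, (((k : ℝ) + 1) * ((k : ℝ) + 2) / 2 ^ (k + 1)) *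
      (Real.sinh x / Real.cosh x ^ (2 * (k + 1) + 3))
    = 4 * Real.sinh (2 * x) / Real.cosh (2 * x) ^ 3 := by
  have hc : cosh x ≠ 0 := (cosh_pos x).ne'
  set r : ℝ := (2 * cosh x ^ 2)⁻¹
  have hr : ‖r‖ < 1 := by
    rw [norm_inv, norm_mul, norm_pow, norm_two, Real.norm_of_nonneg (cosh_pos x).le]
    exact inv_lt_one_of_one_lt₀ (by nlinarith [one_le_cosh x])
  have hterm (k : ℕ) : (((k : ℝ) + 1) * ((k : ℝ) + 2) / 2 ^ (k + 1)) *
      (sinh x / cosh x ^ (2 * (k + 1) + 3))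
      = ((k : ℝ) + 1) * (k + 2) / 2 * r ^ k * (sinh x / cosh x ^ 5) := by
    simp only [r, inv_pow, mul_pow, ← pow_mul]
    field_simp
    ring
  rw [tsum_congr hterm, ((hasSum_triangular_mul_geometric hr).mul_right _).tsum_eq,
    one_sub_inv_two_mul_cosh_sq, sinh_two_mul]
  have hc2 : cosh (2 * x) ≠ 0 := (cosh_pos _).ne'
  field_simp
  ring
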